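/- Let ν be a finite signed or complex Radon measure on K × B_{E*} with ‖T*ν‖ = ‖ν‖, let σ be the pushforward of |ν| under the first projection, and let h : K → B_{E*} be a weak* density of ν. Then ‖h(t)‖ = 1 for σ-almost every t ∈ K; more precisely, the set { t ∈ K : ‖h(t)‖ < 1 } has σ-outer measure zero. -/

import Mathlib

/-!
Write `A_ε = {t : ‖h t‖ ≤ 1 - ε}`. For `‖f‖ ≤ 1` the integrand `t ↦ h t (f t)` of the density is
bounded by `1` everywhere and by `1 - ε` on `A_ε`, so `‖T*ν f‖ ≤ ‖ν‖ - ε σ(A_ε)`. As `‖T*ν‖ = ‖ν‖`,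
every `A_ε` is σ-null, and `{t : ‖h t‖ < 1}` is the countable union of the `A_{1/(n+1)}`.
-/

open MeasureTheory
open scoped ENNReal

noncomputable section

/-- The closed unit ball of the dual of `E`, equipped with the weak* topology. -/
abbrev DualBall (𝕜 E : Type*) [RCLike 𝕜] [NormedAddCommGroup E] [NormedSpace 𝕜 E] :=
  {φ : WeakDual 𝕜 E // ‖WeakDual.toStrongDual φ‖ ≤ 1}

/-- The Borel σ-algebra on `K × B_{E*}`. -/
instance (priority := 1100) prodBallBorelMeasurableSpace (K : Type*) [TopologicalSpace K]
    (𝕜 E : Type*) [RCLike 𝕜] [NormedAddCommGroup E] [NormedSpace 𝕜 E] :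
    MeasurableSpace (K × DualBall 𝕜 E) := borel _

instance (K : Type*) [TopologicalSpace K]
    (𝕜 E : Type*) [RCLike 𝕜] [NormedAddCommGroup E] [NormedSpace 𝕜 E] :
    BorelSpace (K × DualBall 𝕜 E) := ⟨rfl⟩

namespace MeasureTheory

variable {X F : Type*} [MeasurableSpace X] [NormedAddCommGroup F] [NormedSpace ℝ F]
  {μ : Measure X}

/-- `A` need not be measurable: `μ.real A` is its outer measure. -/
theorem norm_integral_add_mul_measureReal_le [IsFiniteMeasure μ] {g : X → F} {A : Set X}
    {ε : ℝ} (hε : 0 ≤ ε) (hg : ∀ x, ‖g x‖ ≤ 1) (hA : ∀ x ∈ A, ‖g x‖ ≤ 1 - ε) :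
    ‖∫ x, g x ∂μ‖ + ε * μ.real A ≤ μ.real Set.univ := by
  by_cases hint : Integrable g μ
  · have hdefect : Integrable (fun x ↦ 1 - ‖g x‖) μ := (integrable_const 1).sub hint.norm
    -- Markov's inequality for the defect `1 - ‖g‖`, which is at least `ε` on `A`
    have hmarkov := mul_meas_ge_le_integral_of_nonneg
      (ae_of_all _ fun x ↦ sub_nonneg.2 (hg x)) hdefect ε
    rw [integral_sub (integrable_const 1) hint.norm, integral_const, smul_eq_mul,
      mul_one] at hmarkov
    have hAsub : μ.real A ≤ μ.real {x | ε ≤ 1 - ‖g x‖} :=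
      measureReal_mono fun x hx ↦ show ε ≤ 1 - ‖g x‖ by linarith [hA x hx]
    calc ‖∫ x, g x ∂μ‖ + ε * μ.real A
        ≤ ∫ x, ‖g x‖ ∂μ + ε * μ.real {x | ε ≤ 1 - ‖g x‖} :=
          add_le_add (norm_integral_le_integral_norm g) (mul_le_mul_of_nonneg_left hAsub hε)
      _ ≤ μ.real Set.univ := by linarith
  · rw [integral_undef hint, norm_zero, zero_add]
    rcases A.eq_empty_or_nonempty with rfl | ⟨x, hx⟩
    · simp
    · have hε1 : ε ≤ 1 := by linarith [hA x hx, norm_nonneg (g x)]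
      calc ε * μ.real A ≤ 1 * μ.real Set.univ :=
            mul_le_mul hε1 (measureReal_mono (Set.subset_univ A)) measureReal_nonneg zero_le_one
        _ = μ.real Set.univ := one_mul _

theorem measure_setOf_lt_eq_zero_of_forall_pos {φ : X → ℝ} {c : ℝ}
    (h : ∀ ε > 0, μ {x | φ x ≤ c - ε} = 0) : μ {x | φ x < c} = 0 := by
  refine measure_mono_null (fun x (hx : φ x < c) ↦ ?_) (measure_iUnion_null fun n : ℕ ↦
    h (1 / (n + 1)) Nat.one_div_pos_of_nat)
  obtain ⟨n, hn⟩ := exists_nat_one_div_lt (sub_pos.2 hx)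
  exact Set.mem_iUnion.2 ⟨n, show φ x ≤ c - 1 / (n + 1) by linarith⟩

end MeasureTheory

theorem weakstar_density_norm_one_ae_general
    (K : Type*) [TopologicalSpace K] [CompactSpace K]
    [MeasurableSpace K] [BorelSpace K]
    (𝕜 E : Type*) [RCLike 𝕜] [NormedAddCommGroup E] [NormedSpace 𝕜 E]
    (τ : Measure (K × DualBall 𝕜 E)) [IsFiniteMeasure τ]
    (ρ : K × DualBall 𝕜 E → 𝕜)
    (σ : Measure K) (hσ : σ = τ.map Prod.fst)
    (hnorm : sSup {r : ℝ | ∃ f : C(K, E), ‖f‖ ≤ 1 ∧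
        r = ‖∫ p, (p.2.1 (f p.1)) * ρ p ∂τ‖} = (τ Set.univ).toReal)
    (h : K → DualBall 𝕜 E)
    (hdens : ∀ f : C(K, E), ∫ p, (p.2.1 (f p.1)) * ρ p ∂τ = ∫ t, (h t).1 (f t) ∂σ) :
    σ {t : K | ‖WeakDual.toStrongDual (h t).1‖ < 1} = 0 := by
  have : IsFiniteMeasure σ := hσ ▸ inferInstance
  have hσuniv : σ.real Set.univ = τ.real Set.univ := by
    rw [hσ, measureReal_def, Measure.map_apply continuous_fst.measurable MeasurableSet.univ,
      Set.preimage_univ, measureReal_def]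
  refine measure_setOf_lt_eq_zero_of_forall_pos fun ε hε ↦ ?_
  set A := {t : K | ‖WeakDual.toStrongDual (h t).1‖ ≤ 1 - ε}
  have hbound : ∀ f : C(K, E), ‖f‖ ≤ 1 →
      ‖∫ p, (p.2.1 (f p.1)) * ρ p ∂τ‖ ≤ τ.real Set.univ - ε * σ.real A := by
    intro f hf
    have heval : ∀ t, ‖(h t).1 (f t)‖ ≤ ‖WeakDual.toStrongDual (h t).1‖ := fun t ↦
      ((WeakDual.toStrongDual (h t).1).le_opNorm_of_le ((f.norm_coe_le_norm t).trans hf)).trans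
        (mul_one _).le
    have hσbound := norm_integral_add_mul_measureReal_le (μ := σ) hε.le
      (fun t ↦ (heval t).trans (h t).2) (fun t (ht : t ∈ A) ↦ (heval t).trans ht)
    rw [hdens f]
    linarith
  have hsup : τ.real Set.univ ≤ τ.real Set.univ - ε * σ.real A :=
    hnorm.symm.trans_le <|
      csSup_le ⟨0, 0, by simp, by simp⟩ (by rintro _ ⟨f, hf, rfl⟩; exact hbound f hf)
  have hA : σ.real A = 0 := le_antisymm (by nlinarith) measureReal_nonneg
  exact (measureReal_eq_zero_iff).1 hA

/-- If a finite signed/complex Radon measure `ν` on `K × B_{E*}` (represented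
by its total variation `τ` and a modulus-one Borel density `ρ`) satisfies `‖T*ν‖ = ‖ν‖`, and
`h : K → B_{E*}` is a weak* density of `ν` with respect to `σ = π₁(|ν|)`, then `‖h(t)‖ = 1`
σ-almost everywhere: the set `{t : ‖h(t)‖ < 1}` has σ-outer measure zero. -/
theorem weakstar_density_norm_one_ae
    (K : Type*) [TopologicalSpace K] [CompactSpace K] [T2Space K]
    [MeasurableSpace K] [BorelSpace K]
    (𝕜 E : Type*) [RCLike 𝕜] [NormedAddCommGroup E] [NormedSpace 𝕜 E] [CompleteSpace E]
    (τ : Measure (K × DualBall 𝕜 E)) [IsFiniteMeasure τ] [τ.Regular]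
    (ρ : K × DualBall 𝕜 E → 𝕜) (hρmeas : Measurable ρ) (hρone : ∀ p, ‖ρ p‖ = 1)
    (σ : Measure K) (hσ : σ = τ.map Prod.fst)
    (hnorm : sSup {r : ℝ | ∃ f : C(K, E), ‖f‖ ≤ 1 ∧
        r = ‖∫ p, (p.2.1 (f p.1)) * ρ p ∂τ‖} = (τ Set.univ).toReal)
    (h : K → DualBall 𝕜 E)
    (hdens : ∀ f : C(K, E), ∫ p, (p.2.1 (f p.1)) * ρ p ∂τ = ∫ t, (h t).1 (f t) ∂σ) :
    σ {t : K | ‖WeakDual.toStrongDual (h t).1‖ < 1} = 0 :=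
  weakstar_density_norm_one_ae_general K 𝕜 E τ ρ σ hσ hnorm h hdens
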